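/- arXiv:2409.05321 — 8 statements merged into one kernel-verified Lean document; each statement's English description precedes it below -/
import Mathlib

section
/- Let f : ℝⁿ → ℝ be continuously differentiable, let {εₖ} be a sequence of positive reals with εₖ → 0, and let {xₖ} be a sequence with xₖ ≥ 0 (componentwise) converging to x*. Suppose for each k: (a) every component of ∇f(xₖ) is ≥ -εₖ, and (b) ‖Sₖ∇f(xₖ)‖ ≤ εₖ, where Sₖ is the diagonal matrix with Sₖ[i,i] = min{xₖⁱ, 1} if ∇ᵢf(xₖ) > 0 and Sₖ[i,i] = 1 otherwise. Then x* satisfies the first-order optimality conditions for min f(x) s.t. x ≥ 0: for every i, ∇ᵢf(x*) ≥ 0, and if x*ⁱ > 0 then ∇ᵢf(x*) = 0. -/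
open Filter Topology

/-- The diagonal entry of the affine scaling matrix `S` at a coordinate with value `y` and
partial derivative `g`. -/
noncomputable def scalingEntry (y g : ℝ) : ℝ := if 0 < g then min y 1 else 1

theorem abs_le_sqrt_sum_sq {ι : Type*} [Fintype ι] (v : ι → ℝ) (i : ι) :
    |v i| ≤ Real.sqrt (∑ j, v j ^ 2) := by
  rw [← Real.sqrt_sq_eq_abs]
  exact Real.sqrt_le_sqrt
    (Finset.single_le_sum (fun j _ => sq_nonneg (v j)) (Finset.mem_univ i))

/-- Near a limit `g ≠ 0` the sign of `gₖ` is eventually that of `g`, so the scaled derivative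
converges to `min y 1 * g` or to `g`; both are nonzero when `y > 0`. -/
theorem eq_zero_of_tendsto_scalingEntry_mul {α : Type*} {l : Filter α} [l.NeBot]
    {y g : α → ℝ} {y₀ g₀ : ℝ} (hg : Tendsto g l (𝓝 g₀)) (hy : Tendsto y l (𝓝 y₀))
    (hy₀ : 0 < y₀) (hscaled : Tendsto (fun k => scalingEntry (y k) (g k) * g k) l (𝓝 0)) :
    g₀ = 0 := by
  rcases lt_trichotomy g₀ 0 with hneg | hzero | hpos
  · have hev : ∀ᶠ k in l, g k < 0 := hg.eventually (eventually_lt_nhds hneg)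
    have hlim : Tendsto (fun k => scalingEntry (y k) (g k) * g k) l (𝓝 g₀) := by
      refine hg.congr' (hev.mono fun k hk => ?_)
      simp [scalingEntry, hk.not_gt]
    exact absurd (tendsto_nhds_unique hlim hscaled) hneg.ne
  · exact hzero
  · have hev : ∀ᶠ k in l, 0 < g k := hg.eventually (eventually_gt_nhds hpos)
    have hlim : Tendsto (fun k => scalingEntry (y k) (g k) * g k) l (𝓝 (min y₀ 1 * g₀)) := by
      refine ((hy.min tendsto_const_nhds).mul hg).congr' (hev.mono fun k hk => ?_)
      simp [scalingEntry, hk]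
    have hpos' : 0 < min y₀ 1 * g₀ := mul_pos (lt_min hy₀ one_pos) hpos
    exact absurd (tendsto_nhds_unique hlim hscaled) hpos'.ne'

theorem stmt_0_general (n : ℕ) (f : (Fin n → ℝ) → ℝ) (hf : ContDiff ℝ 1 f)
    (gradf : (Fin n → ℝ) → Fin n → ℝ)
    (hgrad : ∀ x i, gradf x i = fderiv ℝ f x (Pi.single i 1))
    (ε : ℕ → ℝ)
    (hε : Filter.Tendsto ε Filter.atTop (nhds 0))
    (x : ℕ → Fin n → ℝ) (xs : Fin n → ℝ)
    (hx : Filter.Tendsto x Filter.atTop (nhds xs))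
    (S : ℕ → Fin n → ℝ)
    (hS : ∀ k i, S k i = if 0 < gradf (x k) i then min (x k i) 1 else 1)
    (ha : ∀ k i, -(ε k) ≤ gradf (x k) i)
    (hb : ∀ k, Real.sqrt (∑ i, (S k i * gradf (x k) i) ^ 2) ≤ ε k) :
    (∀ i, 0 ≤ gradf xs i) ∧ (∀ i, 0 < xs i → gradf xs i = 0) := by
  have hgrad_cont (i : Fin n) : Continuous fun y => gradf y i := by
    simpa only [hgrad] using (hf.continuous_fderiv one_ne_zero).clm_apply continuous_const
  have hgrad_tendsto (i : Fin n) : Tendsto (fun k => gradf (x k) i) atTop (𝓝 (gradf xs i)) :=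
    ((hgrad_cont i).tendsto xs).comp hx
  refine ⟨fun i => le_of_tendsto_of_tendsto' (by simpa using hε.neg) (hgrad_tendsto i) (ha · i),
    fun i hi => eq_zero_of_tendsto_scalingEntry_mul (hgrad_tendsto i) (tendsto_pi_nhds.1 hx i) hi
      (squeeze_zero_norm (fun k => ?_) hε)⟩
  rw [Real.norm_eq_abs, scalingEntry, ← hS]
  exact (abs_le_sqrt_sum_sq (fun j => S k j * gradf (x k) j) i).trans (hb k)

/-- limits of ε-approximate first-order points are first-order optimal. -/
theorem stmt_0 (n : ℕ) (f : (Fin n → ℝ) → ℝ) (hf : ContDiff ℝ 1 f)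
    (gradf : (Fin n → ℝ) → Fin n → ℝ)
    (hgrad : ∀ x i, gradf x i = fderiv ℝ f x (Pi.single i 1))
    (ε : ℕ → ℝ) (hεpos : ∀ k, 0 < ε k)
    (hε : Filter.Tendsto ε Filter.atTop (nhds 0))
    (x : ℕ → Fin n → ℝ) (xs : Fin n → ℝ)
    (hxnn : ∀ k i, 0 ≤ x k i)
    (hx : Filter.Tendsto x Filter.atTop (nhds xs))
    (S : ℕ → Fin n → ℝ)
    (hS : ∀ k i, S k i = if 0 < gradf (x k) i then min (x k i) 1 else 1)
    (ha : ∀ k i, -(ε k) ≤ gradf (x k) i)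
    (hb : ∀ k, Real.sqrt (∑ i, (S k i * gradf (x k) i) ^ 2) ≤ ε k) :
    (∀ i, 0 ≤ gradf xs i) ∧ (∀ i, 0 < xs i → gradf xs i = 0) :=
  stmt_0_general n f hf gradf hgrad ε hε x xs hx S hS ha hb
end

section
/- Let x ≥ 0, let g, p ∈ ℝⁿ, and let α ≥ 0. Define x(α)ⁱ = max{xⁱ - α pⁱ, 0}. Suppose for each index i in a set I we have gⁱ > 0 and 0 ≤ pⁱ ≤ λ gⁱ for some λ > 0. Then for each i ∈ I: 0 ≤ xⁱ - x(α)ⁱ ≤ α pⁱ, and consequently Σ_{i∈I} (x(α)ⁱ - xⁱ)² ≤ α λ Σ_{i∈I} gⁱ (xⁱ - x(α)ⁱ). -/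
/-- sign and squared-step bounds on coordinates in I. -/
theorem stmt_3 (n : ℕ) (x g p : Fin n → ℝ) (hx : ∀ i, 0 ≤ x i)
    (α : ℝ) (hα : 0 ≤ α) (lam : ℝ) (hlam : 0 < lam)
    (I : Finset (Fin n))
    (hI : ∀ i ∈ I, 0 < g i ∧ 0 ≤ p i ∧ p i ≤ lam * g i) :
    (∀ i ∈ I, 0 ≤ x i - max (x i - α * p i) 0 ∧ x i - max (x i - α * p i) 0 ≤ α * p i) ∧
    ∑ i ∈ I, (max (x i - α * p i) 0 - x i) ^ 2 ≤
      α * lam * ∑ i ∈ I, g i * (x i - max (x i - α * p i) 0) := by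
  have key : ∀ i ∈ I, 0 ≤ x i - max (x i - α * p i) 0 ∧
      x i - max (x i - α * p i) 0 ≤ α * p i := by
    intro i hi
    obtain ⟨hg, hp0, hpl⟩ := hI i hi
    have hap : 0 ≤ α * p i := mul_nonneg hα hp0
    constructor
    · rcases max_cases (x i - α * p i) 0 with ⟨h, _⟩ | ⟨h, _⟩ <;> rw [h] <;> linarith [hx i]
    · rcases max_cases (x i - α * p i) 0 with ⟨h, _⟩ | ⟨h, _⟩ <;> rw [h] <;> linarith [hx i]
  refine ⟨key, ?_⟩
  rw [Finset.mul_sum]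
  apply Finset.sum_le_sum
  intro i hi
  obtain ⟨hg, hp0, hpl⟩ := hI i hi
  obtain ⟨hd0, hdp⟩ := key i hi
  set d := x i - max (x i - α * p i) 0 with hd
  have h1 : (max (x i - α * p i) 0 - x i) ^ 2 = d ^ 2 := by rw [hd]; ring
  rw [h1]
  have : d ^ 2 ≤ (α * p i) * d := by nlinarith
  calc d ^ 2 ≤ (α * p i) * d := this
    _ ≤ (α * (lam * g i)) * d := by nlinarith [mul_nonneg hα hd0]
    _ = α * lam * (g i * d) := by ring
end

section
/- Let D be symmetric positive definite with zᵀDz ≤ λ_max‖z‖² for all z, S diagonal with entries in [0,1], g ∈ ℝⁿ, and p = S D S g. Then ‖p‖² ≤ λ_max · gᵀp. -/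
/-!
With `w = S g` and `q = D w` we have `p = S q`, so `‖p‖ ≤ ‖q‖` and `gᵀp = wᵀq = wᵀDw`.
It remains to see `‖Dw‖² ≤ λ wᵀDw`: expanding `0 ≤ (λw - q)ᵀD(λw - q)` and bounding
`qᵀDq ≤ λ‖q‖²` gives `0 ≤ λ (λ wᵀDw - ‖q‖²)`, and `λ > 0` because `D` is positive definite.
-/

open Matrix

namespace Matrix

variable {ι : Type*} [Fintype ι]

theorem PosDef.pos_of_dotProduct_mulVec_le [Nonempty ι] {D : Matrix ι ι ℝ} (hD : D.PosDef)
    {lmax : ℝ} (hmax : ∀ z : ι → ℝ, z ⬝ᵥ D *ᵥ z ≤ lmax * (z ⬝ᵥ z)) : 0 < lmax := by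
  obtain ⟨z, hz⟩ := exists_ne (0 : ι → ℝ)
  have hDz : 0 < z ⬝ᵥ D *ᵥ z := by simpa using hD.dotProduct_mulVec_pos hz
  have hzz : 0 < z ⬝ᵥ z := by simpa using dotProduct_self_star_pos_iff.mpr hz
  exact pos_of_mul_pos_left (hDz.trans_le (hmax z)) hzz.le

theorem PosSemidef.mulVec_dotProduct_mulVec_le {D : Matrix ι ι ℝ} (hD : D.PosSemidef)
    {lmax : ℝ} (hlmax : 0 < lmax) (hmax : ∀ z : ι → ℝ, z ⬝ᵥ D *ᵥ z ≤ lmax * (z ⬝ᵥ z))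
    (w : ι → ℝ) : D *ᵥ w ⬝ᵥ D *ᵥ w ≤ lmax * (w ⬝ᵥ D *ᵥ w) := by
  set q := D *ᵥ w
  have hsymm : Dᵀ = D := (isHermitian_iff_isSymm.mp hD.isHermitian).eq
  have hwDq : w ⬝ᵥ D *ᵥ q = q ⬝ᵥ q := by
    rw [← hsymm, dotProduct_transpose_mulVec]
  have hexpand : (lmax • w - q) ⬝ᵥ D *ᵥ (lmax • w - q)
      = lmax * (lmax * (w ⬝ᵥ q) - q ⬝ᵥ q) - (lmax * (q ⬝ᵥ q) - q ⬝ᵥ D *ᵥ q) := by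
    simp only [mulVec_sub, mulVec_smul, sub_dotProduct, dotProduct_sub, smul_dotProduct,
      dotProduct_smul, hwDq, smul_eq_mul]
    ring
  have hquad : 0 ≤ (lmax • w - q) ⬝ᵥ D *ᵥ (lmax • w - q) := by
    simpa using hD.dotProduct_mulVec_nonneg (lmax • w - q)
  have hscaled : 0 ≤ lmax * (lmax * (w ⬝ᵥ q) - q ⬝ᵥ q) := by
    linarith [hmax q]
  linarith [nonneg_of_mul_nonneg_right hscaled hlmax]

theorem dotProduct_mul_self_le {s : ι → ℝ} (hs : ∀ i, |s i| ≤ 1) (q : ι → ℝ) :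
    (s * q) ⬝ᵥ (s * q) ≤ q ⬝ᵥ q :=
  Finset.sum_le_sum fun i _ => by
    have hs_sq : s i * s i ≤ 1 := by nlinarith [abs_mul_abs_self (s i), abs_nonneg (s i), hs i]
    simp only [Pi.mul_apply]
    nlinarith [mul_self_nonneg (q i)]

theorem dotProduct_mul_eq_mul_dotProduct {R : Type*} [CommSemiring R] (g s q : ι → R) : g ⬝ᵥ (s * q) = (s * g) ⬝ᵥ q :=
  Finset.sum_congr rfl fun i _ => by simp only [Pi.mul_apply]; ring

end Matrix

/-- ‖p‖² ≤ λ_max · gᵀp for p = S D S g. -/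
theorem stmt_6 (n : ℕ) (D : Matrix (Fin n) (Fin n) ℝ) (hD : D.PosDef)
    (lmax : ℝ)
    (hmax : ∀ z : Fin n → ℝ, z ⬝ᵥ D.mulVec z ≤ lmax * (z ⬝ᵥ z))
    (S : Fin n → ℝ) (hS : ∀ i, 0 ≤ S i ∧ S i ≤ 1)
    (g p : Fin n → ℝ)
    (hp : p = fun i => S i * D.mulVec (fun j => S j * g j) i) :
    p ⬝ᵥ p ≤ lmax * (g ⬝ᵥ p) := by
  rcases isEmpty_or_nonempty (Fin n) with hempty | hnonempty
  · simp [dotProduct]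
  have hp' : p = S * D *ᵥ (S * g) := hp
  have hSabs : ∀ i, |S i| ≤ 1 := fun i => abs_le.mpr ⟨by linarith [hS i], (hS i).2⟩
  calc p ⬝ᵥ p ≤ D *ᵥ (S * g) ⬝ᵥ D *ᵥ (S * g) := hp' ▸ dotProduct_mul_self_le hSabs _
    _ ≤ lmax * ((S * g) ⬝ᵥ D *ᵥ (S * g)) :=
      hD.posSemidef.mulVec_dotProduct_mulVec_le (hD.pos_of_dotProduct_mulVec_le hmax) hmax _
    _ = lmax * (g ⬝ᵥ p) := by rw [hp', dotProduct_mul_eq_mul_dotProduct]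
end

section
/- Suppose ‖g‖ ≤ G, D is symmetric positive definite with operator norm at most λ_max, S is the diagonal matrix with S[i,i] = min{xⁱ,1} if gⁱ > 0 and S[i,i] = 1 otherwise, where x ≥ 0, and p = S D S g. Then for every index i with gⁱ > 0 and pⁱ > 0, one has xⁱ/pⁱ ≥ 1/(λ_max G). -/
open Matrix

/-- lower bound xⁱ/pⁱ ≥ 1/(λ_max G) on positive-gradient coordinates. -/
theorem stmt_7 (n : ℕ) (x g : Fin n → ℝ) (hx : ∀ i, 0 ≤ x i)
    (G : ℝ) (hG : 0 < G) (hg : Real.sqrt (g ⬝ᵥ g) ≤ G)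
    (D : Matrix (Fin n) (Fin n) ℝ) (hD : D.PosDef)
    (lmax : ℝ) (hlmax : 0 < lmax)
    (hop : ∀ z : Fin n → ℝ,
      Real.sqrt ((D.mulVec z) ⬝ᵥ (D.mulVec z)) ≤ lmax * Real.sqrt (z ⬝ᵥ z))
    (S : Fin n → ℝ)
    (hS : ∀ i, S i = if 0 < g i then min (x i) 1 else 1)
    (p : Fin n → ℝ)
    (hp : p = fun i => S i * D.mulVec (fun j => S j * g j) i) :
    ∀ i, 0 < g i → 0 < p i → 1 / (lmax * G) ≤ x i / p i := by
  intro i hgi hpi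
  set y : Fin n → ℝ := fun j => S j * g j with hy
  have hSb : ∀ j, 0 ≤ S j ∧ S j ≤ 1 := by
    intro j
    rw [hS j]
    split
    · exact ⟨le_min (hx j) zero_le_one, min_le_right _ _⟩
    · exact ⟨zero_le_one, le_refl 1⟩
  -- ‖y‖² ≤ ‖g‖²
  have hyy : y ⬝ᵥ y ≤ g ⬝ᵥ g := by
    unfold dotProduct
    apply Finset.sum_le_sum
    intro j _
    have h1 := (hSb j).1
    have h2 := (hSb j).2
    show (S j * g j) * (S j * g j) ≤ g j * g j
    have h3 : S j * S j ≤ 1 := mul_le_one₀ h2 h1 h2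
    nlinarith [mul_self_nonneg (g j)]
  have hggnn : 0 ≤ g ⬝ᵥ g := Finset.sum_nonneg fun j _ => mul_self_nonneg (g j)
  have hyynn : 0 ≤ y ⬝ᵥ y := Finset.sum_nonneg fun j _ => mul_self_nonneg (y j)
  have hny : Real.sqrt (y ⬝ᵥ y) ≤ G :=
    le_trans (Real.sqrt_le_sqrt hyy) hg
  set v : Fin n → ℝ := D.mulVec y with hv
  have hvi : |v i| ≤ lmax * G := by
    have h1 : v i * v i ≤ v ⬝ᵥ v := by
      unfold dotProduct
      have := Finset.single_le_sum (f := fun j => v j * v j)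
        (fun j _ => mul_self_nonneg (v j)) (Finset.mem_univ i)
      simpa using this
    have h2 : |v i| ≤ Real.sqrt (v ⬝ᵥ v) := by
      rw [← Real.sqrt_mul_self_eq_abs]
      exact Real.sqrt_le_sqrt h1
    have h3 : Real.sqrt (v ⬝ᵥ v) ≤ lmax * Real.sqrt (y ⬝ᵥ y) := hop y
    have h4 : lmax * Real.sqrt (y ⬝ᵥ y) ≤ lmax * G :=
      mul_le_mul_of_nonneg_left hny hlmax.le
    linarith
  have hSi : S i = min (x i) 1 := by rw [hS i]; simp [hgi]
  have hSinn : 0 ≤ S i := (hSb i).1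
  have hpiv : p i = S i * v i := by rw [hp]
  have hSipos : 0 < S i := by
    rcases lt_or_eq_of_le hSinn with h | h
    · exact h
    · exfalso; rw [hpiv, ← h] at hpi; simp at hpi
  have hxipos : 0 < x i := lt_of_lt_of_le hSipos (hSi ▸ min_le_left _ _)
  have hSle : S i ≤ x i := hSi ▸ min_le_left _ _
  have hub : p i ≤ x i * (lmax * G) := by
    rw [hpiv]
    have : v i ≤ lmax * G := le_trans (le_abs_self _) hvi
    have h1 : S i * v i ≤ S i * (lmax * G) := mul_le_mul_of_nonneg_left this hSinn
    have h2 : S i * (lmax * G) ≤ x i * (lmax * G) :=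
      mul_le_mul_of_nonneg_right hSle (by positivity)
    linarith
  rw [div_le_div_iff₀ (by positivity) hpi]
  linarith
end

section
/- Let f : ℝⁿ → ℝ have L-Lipschitz gradient and let x, y ∈ ℝⁿ. Then f(y) - f(x) ≤ ∇f(x)ᵀ(y - x) + (L/2)‖y - x‖². In particular, for x ≥ 0, p ∈ ℝⁿ, x(α) = P(x - αp) (componentwise projection onto the nonnegative orthant), and index sets I⁺, I⁻ partitioning {1,…,n}, if (i) Σ_{i∈I⁻}(x(α)ⁱ - xⁱ)² ≤ α²λ_max Σ_{i∈I⁻} gⁱpⁱ, (ii) Σ_{i∈I⁻} gⁱ(x(α)ⁱ - xⁱ) ≤ -α Σ_{i∈I⁻} gⁱpⁱ, and (iii) Σ_{i∈I⁺}(x(α)ⁱ - xⁱ)² ≤ αλ_max Σ_{i∈I⁺} gⁱ(xⁱ - x(α)ⁱ), where g = ∇f(x), then f(x(α)) - f(x) ≤ (α²λ_maxL/2 - α)Σ_{i∈I⁻} gⁱpⁱ + (αλ_maxL/2 - 1)Σ_{i∈I⁺} gⁱ(xⁱ - x(α)ⁱ). -/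
/-!
Along the segment `t ↦ u + t • (v - u)` the directional derivative of `f` exceeds its value at
`t = 0` by at most `L t ‖v - u‖²` (Cauchy–Schwarz plus the Lipschitz bound on the gradient), so
comparing `f` with the quadratic `t ↦ f u + t ∇f(u)ᵀ(v - u) + (L/2) t² ‖v - u‖²` on `[0, 1]` gives
the descent lemma. At `u = x`, `v = x(α)` its linear and quadratic terms split over `I⁺` and its
complement, and (i)–(iii) bound the pieces.
-/

open Finset Set

theorem ContinuousLinearMap.apply_eq_sum_apply_single_mul {ι : Type*} [Fintype ι] [DecidableEq ι]
    (φ : (ι → ℝ) →L[ℝ] ℝ) (w : ι → ℝ) : φ w = ∑ i, φ (Pi.single i 1) * w i := by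
  conv_lhs => rw [← Finset.univ_sum_single w]
  simp only [map_sum]
  refine Finset.sum_congr rfl fun i _ => ?_
  rw [mul_comm, ← smul_eq_mul, ← map_smul]
  congr 1
  ext j
  simp [Pi.single_apply]

theorem sub_le_deriv_add_half_of_deriv_sub_le {φ φ' : ℝ → ℝ} {c : ℝ}
    (hφ : ∀ t ∈ Icc (0 : ℝ) 1, HasDerivAt φ (φ' t) t)
    (hφ' : ∀ t ∈ Icc (0 : ℝ) 1, φ' t - φ' 0 ≤ c * t) :
    φ 1 - φ 0 ≤ φ' 0 + c / 2 := by
  set ψ : ℝ → ℝ := fun t => φ t - t * φ' 0 - c / 2 * t ^ 2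
  have hψ : ∀ t ∈ Icc (0 : ℝ) 1, HasDerivAt ψ (φ' t - φ' 0 - c * t) t := fun t ht => by
    refine (((hφ t ht).sub ((hasDerivAt_id' t).mul_const (φ' 0))).sub
      ((hasDerivAt_pow 2 t).const_mul (c / 2))).congr_deriv ?_
    norm_num
    ring
  have hanti : AntitoneOn ψ (Icc 0 1) := by
    refine antitoneOn_of_deriv_nonpos (convex_Icc 0 1)
      (fun t ht => (hψ t ht).continuousAt.continuousWithinAt) (fun t ht => ?_) fun t ht => ?_
    all_goals rw [interior_Icc] at ht
    · exact (hψ t (Ioo_subset_Icc_self ht)).differentiableAt.differentiableWithinAt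
    · rw [(hψ t (Ioo_subset_Icc_self ht)).deriv]
      linarith [hφ' t (Ioo_subset_Icc_self ht)]
  have hψ01 := hanti (left_mem_Icc.2 zero_le_one) (right_mem_Icc.2 zero_le_one) zero_le_one
  simp only [ψ] at hψ01
  linarith

theorem sub_le_fderiv_add_of_fderiv_sub_le {E : Type*} [NormedAddCommGroup E] [NormedSpace ℝ E]
    {f : E → ℝ} (hf : Differentiable ℝ f) (u w : E) {c : ℝ}
    (h : ∀ t ∈ Icc (0 : ℝ) 1, fderiv ℝ f (u + t • w) w - fderiv ℝ f u w ≤ c * t) :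
    f (u + w) - f u ≤ fderiv ℝ f u w + c / 2 := by
  have hline : ∀ t : ℝ, HasDerivAt (fun s : ℝ => u + s • w) w t := fun t => by
    simpa using ((hasDerivAt_id t).smul_const w).const_add u
  have := sub_le_deriv_add_half_of_deriv_sub_le (φ := fun t => f (u + t • w))
    (φ' := fun t => fderiv ℝ f (u + t • w) w)
    (fun t _ => (hf _).hasFDerivAt.comp_hasDerivAt t (hline t)) (by simpa using h)
  simpa using this

section Coordinates

variable {ι : Type*} [Fintype ι] [DecidableEq ι] {f : (ι → ℝ) → ℝ} {grad : (ι → ℝ) → ι → ℝ}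
  {L : ℝ}

theorem fderiv_sub_fderiv_apply_le_of_grad
    (hgrad : ∀ x i, grad x i = fderiv ℝ f x (Pi.single i 1))
    (hlip : ∀ u v : ι → ℝ,
      √(∑ i, (grad u i - grad v i) ^ 2) ≤ L * √(∑ i, (u i - v i) ^ 2))
    (z u w : ι → ℝ) :
    fderiv ℝ f z w - fderiv ℝ f u w ≤ L * √(∑ i, (z i - u i) ^ 2) * √(∑ i, w i ^ 2) := by
  calc fderiv ℝ f z w - fderiv ℝ f u w = ∑ i, (grad z i - grad u i) * w i := by
        simp only [ContinuousLinearMap.apply_eq_sum_apply_single_mul _ w, hgrad, sub_mul,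
          Finset.sum_sub_distrib]
    _ ≤ √(∑ i, (grad z i - grad u i) ^ 2) * √(∑ i, w i ^ 2) :=
        Real.sum_mul_le_sqrt_mul_sqrt _ _ _
    _ ≤ L * √(∑ i, (z i - u i) ^ 2) * √(∑ i, w i ^ 2) := by gcongr; exact hlip z u

theorem sub_le_sum_grad_mul_add_of_grad_lipschitz (hf : Differentiable ℝ f)
    (hgrad : ∀ x i, grad x i = fderiv ℝ f x (Pi.single i 1))
    (hlip : ∀ u v : ι → ℝ,
      √(∑ i, (grad u i - grad v i) ^ 2) ≤ L * √(∑ i, (u i - v i) ^ 2))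
    (u v : ι → ℝ) :
    f v - f u ≤ ∑ i, grad u i * (v i - u i) + L / 2 * ∑ i, (v i - u i) ^ 2 := by
  set w := v - u
  have hE : 0 ≤ ∑ i, w i ^ 2 := by positivity
  have hstep : ∀ t ∈ Icc (0 : ℝ) 1,
      fderiv ℝ f (u + t • w) w - fderiv ℝ f u w ≤ L * (∑ i, w i ^ 2) * t := fun t ht => by
    have hdist : √(∑ i, ((u + t • w) i - u i) ^ 2) = t * √(∑ i, w i ^ 2) := by
      simp only [Pi.add_apply, Pi.smul_apply, smul_eq_mul, add_sub_cancel_left, mul_pow,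
        ← Finset.mul_sum]
      rw [Real.sqrt_mul (sq_nonneg t), Real.sqrt_sq ht.1]
    have := fderiv_sub_fderiv_apply_le_of_grad hgrad hlip (u + t • w) u w
    rw [hdist] at this
    calc _ ≤ _ := this
      _ = L * (√(∑ i, w i ^ 2) * √(∑ i, w i ^ 2)) * t := by ring
      _ = L * (∑ i, w i ^ 2) * t := by rw [Real.mul_self_sqrt hE]
  have := sub_le_fderiv_add_of_fderiv_sub_le hf u w hstep
  rw [add_sub_cancel u v, ContinuousLinearMap.apply_eq_sum_apply_single_mul] at this
  simp only [w, Pi.sub_apply, hgrad] at this ⊢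
  linarith

end Coordinates

theorem sub_le_of_descent_of_partition {ι : Type*} [Fintype ι] [DecidableEq ι]
    {F₀ F₁ L a lmax : ℝ} {g x y p : ι → ℝ} {I : Finset ι} (hL : 0 ≤ L)
    (hdesc : F₁ - F₀ ≤ ∑ i, g i * (y i - x i) + L / 2 * ∑ i, (y i - x i) ^ 2)
    (h1 : ∑ i ∈ Iᶜ, (y i - x i) ^ 2 ≤ a ^ 2 * lmax * ∑ i ∈ Iᶜ, g i * p i)
    (h2 : ∑ i ∈ Iᶜ, g i * (y i - x i) ≤ -a * ∑ i ∈ Iᶜ, g i * p i)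
    (h3 : ∑ i ∈ I, (y i - x i) ^ 2 ≤ a * lmax * ∑ i ∈ I, g i * (x i - y i)) :
    F₁ - F₀ ≤ (a ^ 2 * lmax * L / 2 - a) * ∑ i ∈ Iᶜ, g i * p i
      + (a * lmax * L / 2 - 1) * ∑ i ∈ I, g i * (x i - y i) := by
  rw [← sum_add_sum_compl I, ← sum_add_sum_compl I] at hdesc
  have hflip : ∑ i ∈ I, g i * (y i - x i) = -∑ i ∈ I, g i * (x i - y i) := by
    rw [← sum_neg_distrib]
    exact sum_congr rfl fun i _ => by ring
  rw [hflip] at hdesc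
  nlinarith [mul_le_mul_of_nonneg_left h1 hL, mul_le_mul_of_nonneg_left h3 hL]

theorem stmt_8_general (n : ℕ) (f : (Fin n → ℝ) → ℝ) (hf : Differentiable ℝ f)
    (gradf : (Fin n → ℝ) → Fin n → ℝ)
    (hgrad : ∀ x i, gradf x i = fderiv ℝ f x (Pi.single i 1))
    (L : ℝ) (hL : 0 < L)
    (hlip : ∀ u v : Fin n → ℝ,
      Real.sqrt (∑ i, (gradf u i - gradf v i) ^ 2) ≤ L * Real.sqrt (∑ i, (u i - v i) ^ 2))
    (x : Fin n → ℝ)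
    (p : Fin n → ℝ) (α : ℝ) (lmax : ℝ)
    (Iplus : Finset (Fin n))
    (g : Fin n → ℝ) (hg : g = gradf x)
    (xα : Fin n → ℝ)
    (h1 : ∑ i ∈ Iplusᶜ, (xα i - x i) ^ 2 ≤ α ^ 2 * lmax * ∑ i ∈ Iplusᶜ, g i * p i)
    (h2 : ∑ i ∈ Iplusᶜ, g i * (xα i - x i) ≤ -α * ∑ i ∈ Iplusᶜ, g i * p i)
    (h3 : ∑ i ∈ Iplus, (xα i - x i) ^ 2 ≤ α * lmax * ∑ i ∈ Iplus, g i * (x i - xα i)) :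
    (∀ u v : Fin n → ℝ,
      f v - f u ≤ ∑ i, gradf u i * (v i - u i) + L / 2 * ∑ i, (v i - u i) ^ 2) ∧
    f xα - f x ≤ (α ^ 2 * lmax * L / 2 - α) * ∑ i ∈ Iplusᶜ, g i * p i
      + (α * lmax * L / 2 - 1) * ∑ i ∈ Iplus, g i * (x i - xα i) := by
  have hdescent := sub_le_sum_grad_mul_add_of_grad_lipschitz hf hgrad hlip
  refine ⟨hdescent, sub_le_of_descent_of_partition hL.le ?_ h1 h2 h3⟩
  simpa only [hg] using hdescent x xα

/-- descent lemma and the resulting bound on f(x(α)) - f(x). -/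
theorem stmt_8 (n : ℕ) (f : (Fin n → ℝ) → ℝ) (hf : Differentiable ℝ f)
    (gradf : (Fin n → ℝ) → Fin n → ℝ)
    (hgrad : ∀ x i, gradf x i = fderiv ℝ f x (Pi.single i 1))
    (L : ℝ) (hL : 0 < L)
    (hlip : ∀ u v : Fin n → ℝ,
      Real.sqrt (∑ i, (gradf u i - gradf v i) ^ 2) ≤ L * Real.sqrt (∑ i, (u i - v i) ^ 2))
    (x : Fin n → ℝ) (hx : ∀ i, 0 ≤ x i)
    (p : Fin n → ℝ) (α : ℝ) (hα : 0 ≤ α) (lmax : ℝ) (hlmax : 0 < lmax)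
    (Iplus : Finset (Fin n))
    (g : Fin n → ℝ) (hg : g = gradf x)
    (xα : Fin n → ℝ) (hxα : xα = fun i => max (x i - α * p i) 0)
    (h1 : ∑ i ∈ Iplusᶜ, (xα i - x i) ^ 2 ≤ α ^ 2 * lmax * ∑ i ∈ Iplusᶜ, g i * p i)
    (h2 : ∑ i ∈ Iplusᶜ, g i * (xα i - x i) ≤ -α * ∑ i ∈ Iplusᶜ, g i * p i)
    (h3 : ∑ i ∈ Iplus, (xα i - x i) ^ 2 ≤ α * lmax * ∑ i ∈ Iplus, g i * (x i - xα i)) :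
    (∀ u v : Fin n → ℝ,
      f v - f u ≤ ∑ i, gradf u i * (v i - u i) + L / 2 * ∑ i, (v i - u i) ^ 2) ∧
    f xα - f x ≤ (α ^ 2 * lmax * L / 2 - α) * ∑ i ∈ Iplusᶜ, g i * p i
      + (α * lmax * L / 2 - 1) * ∑ i ∈ Iplus, g i * (x i - xα i) :=
  stmt_8_general n f hf gradf hgrad L hL hlip x p α lmax Iplus g hg xα h1 h2 h3
end

section
/- Under the hypotheses of the previous statement, if additionally 0 < α ≤ 2(1-σ)/(Lλ_max) for some σ ∈ (0,1) and both Σ_{i∈I⁻} gⁱpⁱ ≥ 0 and Σ_{i∈I⁺} gⁱ(xⁱ - x(α)ⁱ) ≥ 0, then the sufficient decrease (Armijo-type) condition holds: f(x) - f(x(α)) ≥ σ[α Σ_{i∈I⁻} gⁱpⁱ + Σ_{i∈I⁺} gⁱ(xⁱ - x(α)ⁱ)]. -/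
/-- With `κ = L λ_max`, the step-size bound `α ≤ 2(1 - σ)/κ` makes the two coefficients of the
quadratic upper bound at most `-σα` and `-σ` respectively. -/
theorem sufficient_decrease_of_quadratic_upper_bound {κ α σ a b d : ℝ} (hκ : 0 < κ)
    (hα : 0 ≤ α) (hα2 : α ≤ 2 * (1 - σ) / κ) (ha : 0 ≤ a) (hb : 0 ≤ b)
    (hd : d ≤ (α ^ 2 * κ / 2 - α) * a + (α * κ / 2 - 1) * b) :
    σ * (α * a + b) ≤ -d := by
  have hακ : α * κ ≤ 2 * (1 - σ) := (le_div_iff₀ hκ).mp hα2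
  have hcoef_a : α ^ 2 * κ / 2 - α ≤ -(σ * α) := by nlinarith [mul_le_mul_of_nonneg_left hακ hα]
  have hcoef_b : α * κ / 2 - 1 ≤ -σ := by linarith
  nlinarith [mul_le_mul_of_nonneg_right hcoef_a ha, mul_le_mul_of_nonneg_right hcoef_b hb]

theorem stmt_9_general (n : ℕ) (f : (Fin n → ℝ) → ℝ)
    (L : ℝ) (hL : 0 < L)
    (x : Fin n → ℝ)
    (p : Fin n → ℝ) (α : ℝ) (lmax : ℝ) (hlmax : 0 < lmax)
    (σ : ℝ)
    (hα : 0 < α) (hα2 : α ≤ 2 * (1 - σ) / (L * lmax))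
    (Iplus : Finset (Fin n))
    (g : Fin n → ℝ)
    (xα : Fin n → ℝ)
    (hquad : f xα - f x ≤ (α ^ 2 * lmax * L / 2 - α) * ∑ i ∈ Iplusᶜ, g i * p i
      + (α * lmax * L / 2 - 1) * ∑ i ∈ Iplus, g i * (x i - xα i))
    (hpos1 : 0 ≤ ∑ i ∈ Iplusᶜ, g i * p i)
    (hpos2 : 0 ≤ ∑ i ∈ Iplus, g i * (x i - xα i)) :
    f x - f xα ≥ σ * (α * ∑ i ∈ Iplusᶜ, g i * p i + ∑ i ∈ Iplus, g i * (x i - xα i)) := by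
  have h := sufficient_decrease_of_quadratic_upper_bound (mul_pos hL hlmax) hα.le hα2 hpos1 hpos2
    (hquad.trans_eq (by ring))
  linarith

/-- the Armijo sufficient-decrease condition under the stepsize bound. -/
theorem stmt_9 (n : ℕ) (f : (Fin n → ℝ) → ℝ) (hf : Differentiable ℝ f)
    (gradf : (Fin n → ℝ) → Fin n → ℝ)
    (hgrad : ∀ x i, gradf x i = fderiv ℝ f x (Pi.single i 1))
    (L : ℝ) (hL : 0 < L)
    (hlip : ∀ u v : Fin n → ℝ,
      Real.sqrt (∑ i, (gradf u i - gradf v i) ^ 2) ≤ L * Real.sqrt (∑ i, (u i - v i) ^ 2))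
    (x : Fin n → ℝ) (hx : ∀ i, 0 ≤ x i)
    (p : Fin n → ℝ) (α : ℝ) (lmax : ℝ) (hlmax : 0 < lmax)
    (σ : ℝ) (hσ : σ ∈ Set.Ioo (0 : ℝ) 1)
    (hα : 0 < α) (hα2 : α ≤ 2 * (1 - σ) / (L * lmax))
    (Iplus : Finset (Fin n))
    (g : Fin n → ℝ) (hg : g = gradf x)
    (xα : Fin n → ℝ) (hxα : xα = fun i => max (x i - α * p i) 0)
    (hquad : f xα - f x ≤ (α ^ 2 * lmax * L / 2 - α) * ∑ i ∈ Iplusᶜ, g i * p i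
      + (α * lmax * L / 2 - 1) * ∑ i ∈ Iplus, g i * (x i - xα i))
    (hpos1 : 0 ≤ ∑ i ∈ Iplusᶜ, g i * p i)
    (hpos2 : 0 ≤ ∑ i ∈ Iplus, g i * (x i - xα i)) :
    f x - f xα ≥ σ * (α * ∑ i ∈ Iplusᶜ, g i * p i + ∑ i ∈ Iplus, g i * (x i - xα i)) :=
  stmt_9_general n f L hL x p α lmax hlmax σ hα hα2 Iplus g xα hquad hpos1 hpos2
end

section
/- Fix x ∈ ℝⁿ, γ > 0, g = ∇f(x), a symmetric positive definite matrix D that is diagonal with respect to the index set I⁺ = {i : xⁱ = 0 and |gⁱ| < γ}, and define ω ∈ ℝⁿ by ωⁱ = γ if (xⁱ > 0 or (xⁱ = 0 and gⁱ ≤ -γ)), ωⁱ = -γ if (xⁱ < 0 or (xⁱ = 0 and gⁱ ≥ γ)), ωⁱ = 0 if i ∈ I⁺. Let p = D(g + ω) and define x(α) componentwise by: x(α)ⁱ = max{xⁱ - αpⁱ, 0} if xⁱ > 0 or (xⁱ=0 and gⁱ ≤ -γ); x(α)ⁱ = min{xⁱ - αpⁱ, 0} if xⁱ < 0 or (xⁱ=0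 and gⁱ ≥ γ); x(α)ⁱ = 0 if i ∈ I⁺. Then x(α) = x for all α > 0 if and only if x satisfies the first-order conditions: ∇ᵢf(x) = -γ when xⁱ > 0, ∇ᵢf(x) ∈ [-γ,γ] when xⁱ = 0, and ∇ᵢf(x) = γ when xⁱ < 0. -/
/-!
Put `v = g + ω`. Off `I⁺` the first-order conditions say exactly that `vⁱ = 0`, while the
fixed-point property says that `vⁱ pⁱ ≤ 0`: on an open orthant `pⁱ` must vanish, and on a
boundary face the step `-α pⁱ` must point out of the orthant, which gives `pⁱ` the sign opposite
to `vⁱ`. Since the rows of `D` indexed by `I⁺` are diagonal, `p` agrees off `I⁺` with `D w`, where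
`w` is `v` with its `I⁺` entries set to zero; summing gives `wᵀ D w ≤ 0`, so `w = 0` by positive
definiteness.
Conversely, `v = 0` off `I⁺` gives `p = 0` off `I⁺`, and then no coordinate moves.
-/

open Matrix

namespace Matrix

variable {ι R : Type*} [Fintype ι] {S : Set ι}

section Semiring

variable [NonUnitalNonAssocSemiring R] {D : Matrix ι ι R}

theorem mulVec_apply_eq_mulVec_indicator_compl (hD : D.IsSymm)
    (hS : ∀ i ∈ S, ∀ j, j ≠ i → D i j = 0) (v : ι → R) {i : ι} (hi : i ∉ S) :
    (D *ᵥ v) i = (D *ᵥ Sᶜ.indicator v) i := by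
  refine Finset.sum_congr rfl fun j _ => ?_
  by_cases hj : j ∈ S
  · have hDij : D i j = 0 := (hD.apply j i).trans (hS j hj i fun h => hi (h ▸ hj))
    simp [hDij]
  · rw [Set.indicator_of_mem (Set.mem_compl hj)]

theorem mulVec_apply_eq_zero_of_forall_notMem (hD : D.IsSymm)
    (hS : ∀ i ∈ S, ∀ j, j ≠ i → D i j = 0) {v : ι → R} (hv : ∀ i ∉ S, v i = 0) :
    ∀ i ∉ S, (D *ᵥ v) i = 0 := by
  intro i hi
  have hind : Sᶜ.indicator v = 0 :=
    Set.indicator_eq_zero'.2 (Set.disjoint_left.2 fun j hj hjS => hj (hv j hjS))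
  rw [mulVec_apply_eq_mulVec_indicator_compl hD hS v hi, hind, mulVec_zero, Pi.zero_apply]

end Semiring

theorem PosDef.eq_zero_of_forall_notMem_mul_mulVec_nonpos [CommRing R] [PartialOrder R]
    [IsOrderedRing R] [StarRing R] [TrivialStar R] {D : Matrix ι ι R} (hD : D.PosDef)
    (hS : ∀ i ∈ S, ∀ j, j ≠ i → D i j = 0) {v : ι → R}
    (hv : ∀ i ∉ S, v i * (D *ᵥ v) i ≤ 0) : ∀ i ∉ S, v i = 0 := by
  have hsymm : D.IsSymm := isHermitian_iff_isSymm.1 hD.isHermitian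
  set w := Sᶜ.indicator v
  have hquad : w ⬝ᵥ (D *ᵥ w) ≤ 0 := by
    refine Finset.sum_nonpos fun i _ => ?_
    by_cases hi : i ∈ S
    · simp [w, hi]
    · rw [← mulVec_apply_eq_mulVec_indicator_compl hsymm hS v hi]
      simpa [w, hi] using hv i hi
  have hw0 : w = 0 := by
    by_contra hne
    have hpos := hD.dotProduct_mulVec_pos hne
    rw [star_trivial] at hpos
    exact hquad.not_gt hpos
  intro i hi
  simpa [w, hi] using congrFun hw0 i

end Matrix

section Coordinatewise

variable {x v g ω γ p : ℝ} {y : ℝ → ℝ}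

theorem eq_zero_of_forall_max_sub_mul_eq_self (hx : 0 < x)
    (h : ∀ α > 0, max (x - α * p) 0 = x) : p = 0 := by
  rcases lt_trichotomy p 0 with hp | hp | hp
  · have h1 := h 1 one_pos
    rw [max_eq_left (by linarith)] at h1
    linarith
  · exact hp
  · have h1 := h (x / (2 * p)) (by positivity)
    rw [show x - x / (2 * p) * p = x / 2 by field_simp; ring,
      max_eq_left (by linarith)] at h1
    linarith

theorem mul_nonpos_of_forall_max_sub_mul_eq_self (hx : 0 < x ∨ x = 0 ∧ v ≤ 0)
    (h : ∀ α > 0, max (x - α * p) 0 = x) : v * p ≤ 0 := by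
  rcases hx with hx | ⟨rfl, hv⟩
  · simp [eq_zero_of_forall_max_sub_mul_eq_self hx h]
  · have h1 := h 1 one_pos
    exact mul_nonpos_of_nonpos_of_nonneg hv (by linarith [le_max_left (0 - 1 * p) 0])

theorem mul_nonpos_of_forall_min_sub_mul_eq_self (hx : x < 0 ∨ x = 0 ∧ 0 ≤ v)
    (h : ∀ α > 0, min (x - α * p) 0 = x) : v * p ≤ 0 := by
  have hneg : ∀ α > 0, max (-x - α * -p) 0 = -x := fun α hα => by
    rw [show -x - α * -p = -(x - α * p) by ring, ← neg_zero, max_neg_neg, h α hα]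
  simpa using mul_nonpos_of_forall_max_sub_mul_eq_self (v := -v)
    (by rcases hx with hx | ⟨rfl, hv⟩ <;> simp [*]) hneg

theorem max_face_or_min_face_of_not_free (h : ¬(x = 0 ∧ |g| < γ)) :
    (0 < x ∨ x = 0 ∧ g ≤ -γ) ∨ (x < 0 ∨ x = 0 ∧ γ ≤ g) := by
  rw [abs_lt] at h
  grind

theorem stationary_iff_add_eq_zero
    (hω : (0 < x ∨ x = 0 ∧ g ≤ -γ → ω = γ) ∧ (x < 0 ∨ x = 0 ∧ γ ≤ g → ω = -γ)) :
    ((0 < x → g = -γ) ∧ (x = 0 → -γ ≤ g ∧ g ≤ γ) ∧ (x < 0 → g = γ)) ↔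
      (¬(x = 0 ∧ |g| < γ) → g + ω = 0) := by
  rw [abs_lt]
  grind

/-- The coordinate `xⁱ(α)` of the paper, as a function of `α`. -/
def IsProjectedStep (γ x g p : ℝ) (y : ℝ → ℝ) : Prop :=
  ∀ α, (0 < x ∨ x = 0 ∧ g ≤ -γ → y α = max (x - α * p) 0) ∧
    (x < 0 ∨ x = 0 ∧ γ ≤ g → y α = min (x - α * p) 0) ∧ (x = 0 ∧ |g| < γ → y α = 0)

theorem IsProjectedStep.add_mul_nonpos (hy : IsProjectedStep γ x g p y)
    (hω : (0 < x ∨ x = 0 ∧ g ≤ -γ → ω = γ) ∧ (x < 0 ∨ x = 0 ∧ γ ≤ g → ω = -γ))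
    (hfree : ¬(x = 0 ∧ |g| < γ)) (hfix : ∀ α > 0, y α = x) : (g + ω) * p ≤ 0 := by
  rcases max_face_or_min_face_of_not_free hfree with hmax | hmin
  · rw [hω.1 hmax]
    exact mul_nonpos_of_forall_max_sub_mul_eq_self
      (hmax.imp_right (And.imp_right fun hg => by linarith))
      fun α hα => ((hy α).1 hmax).symm.trans (hfix α hα)
  · rw [hω.2 hmin]
    exact mul_nonpos_of_forall_min_sub_mul_eq_self
      (hmin.imp_right (And.imp_right fun hg => by linarith))
      fun α hα => ((hy α).2.1 hmin).symm.trans (hfix α hα)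

theorem IsProjectedStep.eq_self (hy : IsProjectedStep γ x g p y)
    (hp : ¬(x = 0 ∧ |g| < γ) → p = 0) (α : ℝ) : y α = x := by
  by_cases hfree : x = 0 ∧ |g| < γ
  · rw [(hy α).2.2 hfree, hfree.1]
  · rcases max_face_or_min_face_of_not_free hfree with hmax | hmin
    · rw [(hy α).1 hmax, hp hfree, mul_zero, sub_zero,
        max_eq_left (hmax.elim le_of_lt fun h => h.1.ge)]
    · rw [(hy α).2.1 hmin, hp hfree, mul_zero, sub_zero,
        min_eq_left (hmin.elim le_of_lt fun h => h.1.le)]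

end Coordinatewise

theorem stmt_15_general (n : ℕ) (γ : ℝ)
    (x : Fin n → ℝ) (g : Fin n → ℝ)
    (D : Matrix (Fin n) (Fin n) ℝ) (hD : D.PosDef)
    (Iplus : Finset (Fin n))
    (hIplus : ∀ i, i ∈ Iplus ↔ x i = 0 ∧ |g i| < γ)
    (hdiag : ∀ i ∈ Iplus, ∀ j, j ≠ i → D i j = 0)
    (ω : Fin n → ℝ)
    (hω : ∀ i, (0 < x i ∨ (x i = 0 ∧ g i ≤ -γ) → ω i = γ) ∧
      (x i < 0 ∨ (x i = 0 ∧ γ ≤ g i) → ω i = -γ) ∧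
      (x i = 0 ∧ |g i| < γ → ω i = 0))
    (p : Fin n → ℝ) (hp : p = D.mulVec (g + ω))
    (xα : ℝ → Fin n → ℝ)
    (hxα : ∀ α i,
      (0 < x i ∨ (x i = 0 ∧ g i ≤ -γ) → xα α i = max (x i - α * p i) 0) ∧
      (x i < 0 ∨ (x i = 0 ∧ γ ≤ g i) → xα α i = min (x i - α * p i) 0) ∧
      (x i = 0 ∧ |g i| < γ → xα α i = 0)) :
    (∀ α > 0, xα α = x) ↔
      ∀ i, (0 < x i → g i = -γ) ∧ (x i = 0 → -γ ≤ g i ∧ g i ≤ γ) ∧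
        (x i < 0 → g i = γ) := by
  have hsymm : D.IsSymm := isHermitian_iff_isSymm.1 hD.isHermitian
  have hstep : ∀ i, IsProjectedStep γ (x i) (g i) (p i) (xα · i) := fun i α => hxα α i
  have hstat : ∀ i, ((0 < x i → g i = -γ) ∧ (x i = 0 → -γ ≤ g i ∧ g i ≤ γ) ∧
      (x i < 0 → g i = γ)) ↔ (i ∉ (Iplus : Set (Fin n)) → (g + ω) i = 0) := fun i => by
    rw [stationary_iff_add_eq_zero ⟨(hω i).1, (hω i).2.1⟩, Finset.mem_coe, hIplus i]; rfl
  simp only [hstat]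
  constructor
  · intro hfix
    refine hD.eq_zero_of_forall_notMem_mul_mulVec_nonpos (S := Iplus) hdiag fun i hi => ?_
    rw [← hp]
    exact (hstep i).add_mul_nonpos ⟨(hω i).1, (hω i).2.1⟩ ((hIplus i).not.1 hi)
      fun α hα => congrFun (hfix α hα) i
  · intro hv α _
    have hp0 : ∀ i ∉ Iplus, p i = 0 := hp ▸ mulVec_apply_eq_zero_of_forall_notMem hsymm hdiag hv
    funext i
    exact (hstep i).eq_self (fun hi => hp0 i ((hIplus i).not.2 hi)) α

/-- fixed points of the two-metric adaptive projection step are exactly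
the first-order stationary points of ψ = f + γ‖·‖₁. -/
theorem stmt_15 (n : ℕ) (γ : ℝ) (hγ : 0 < γ)
    (f : (Fin n → ℝ) → ℝ) (hf : Differentiable ℝ f)
    (x : Fin n → ℝ) (g : Fin n → ℝ)
    (hg : ∀ i, g i = fderiv ℝ f x (Pi.single i 1))
    (D : Matrix (Fin n) (Fin n) ℝ) (hD : D.PosDef)
    (Iplus : Finset (Fin n))
    (hIplus : ∀ i, i ∈ Iplus ↔ x i = 0 ∧ |g i| < γ)
    (hdiag : ∀ i ∈ Iplus, ∀ j, j ≠ i → D i j = 0)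
    (ω : Fin n → ℝ)
    (hω : ∀ i, (0 < x i ∨ (x i = 0 ∧ g i ≤ -γ) → ω i = γ) ∧
      (x i < 0 ∨ (x i = 0 ∧ γ ≤ g i) → ω i = -γ) ∧
      (x i = 0 ∧ |g i| < γ → ω i = 0))
    (p : Fin n → ℝ) (hp : p = D.mulVec (g + ω))
    (xα : ℝ → Fin n → ℝ)
    (hxα : ∀ α i,
      (0 < x i ∨ (x i = 0 ∧ g i ≤ -γ) → xα α i = max (x i - α * p i) 0) ∧
      (x i < 0 ∨ (x i = 0 ∧ γ ≤ g i) → xα α i = min (x i - α * p i) 0) ∧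
      (x i = 0 ∧ |g i| < γ → xα α i = 0)) :
    (∀ α > 0, xα α = x) ↔
      ∀ i, (0 < x i → g i = -γ) ∧ (x i = 0 → -γ ≤ g i ∧ g i ≤ γ) ∧
        (x i < 0 → g i = γ) :=
  stmt_15_general n γ x g D hD Iplus hIplus hdiag ω hω p hp xα hxα
end

section
/- In the setting of the two-metric adaptive projection step for ψ = f + γ‖x‖₁ with f having L-Lipschitz gradient: for a fixed σ ∈ (0,1), if 0 < α ≤ 2(1-σ)/(Lλ_max) (λ_max an upper bound on the eigenvalues of D) and α is small enough that xⁱ and x(α)ⁱ have the same sign for all i with xⁱ ≠ 0, then ψ(x) - ψ(x(α)) ≥ σα(ḡ+ω̄)ᵀp̄. -/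
open Matrix



/-- Quadratic form bound: `‖Dv‖² ≤ λmax · vᵀDv` for PSD `D` with `D ⪯ λmax I`. -/
lemma matkey {n : ℕ} (D : Matrix (Fin n) (Fin n) ℝ) (hD : D.PosSemidef)
    (lmax : ℝ) (hmax : ∀ z : Fin n → ℝ, z ⬝ᵥ D.mulVec z ≤ lmax * (z ⬝ᵥ z))
    (v : Fin n → ℝ) :
    (D.mulVec v) ⬝ᵥ (D.mulVec v) ≤ lmax * (v ⬝ᵥ D.mulVec v) := by
  set S := (open scoped MatrixOrder in CFC.sqrt D) with hSdef
  have hS : S.PosSemidef := by open scoped MatrixOrder in exact (CFC.sqrt_nonneg D).posSemidef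
  have hSS : S * S = D := by open scoped MatrixOrder in exact CFC.sqrt_mul_sqrt_self D hD.nonneg
  have hsym : Sᵀ = S := by
    have := hS.isHermitian
    rwa [Matrix.IsHermitian, Matrix.conjTranspose_eq_transpose_of_trivial] at this
  have key : ∀ a b : Fin n → ℝ, a ⬝ᵥ (D.mulVec b) = (S.mulVec a) ⬝ᵥ (S.mulVec b) := by
    intro a b
    rw [← hSS, ← Matrix.mulVec_mulVec, Matrix.dotProduct_mulVec]
    congr 1
    conv_rhs => rw [← hsym, Matrix.mulVec_transpose]
  calc (D.mulVec v) ⬝ᵥ (D.mulVec v)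
      = (S.mulVec (S.mulVec v)) ⬝ᵥ (S.mulVec (S.mulVec v)) := by
        rw [← hSS, ← Matrix.mulVec_mulVec]
    _ = (S.mulVec v) ⬝ᵥ (D.mulVec (S.mulVec v)) := (key _ _).symm
    _ ≤ lmax * ((S.mulVec v) ⬝ᵥ (S.mulVec v)) := hmax _
    _ = lmax * (v ⬝ᵥ D.mulVec v) := by rw [← key]

/-- Gradient as sum. -/
lemma fderiv_apply_eq_sum {n : ℕ} (f : (Fin n → ℝ) → ℝ)
    (gradf : (Fin n → ℝ) → Fin n → ℝ)
    (hgrad : ∀ y i, gradf y i = fderiv ℝ f y (Pi.single i 1))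
    (y d : Fin n → ℝ) :
    fderiv ℝ f y d = ∑ i, gradf y i * d i := by
  have h := LinearMap.pi_apply_eq_sum_univ ((fderiv ℝ f y) : (Fin n → ℝ) →ₗ[ℝ] ℝ) d
  simp only [ContinuousLinearMap.coe_coe] at h
  rw [h]
  refine Finset.sum_congr rfl fun i _ => ?_
  rw [hgrad, smul_eq_mul, mul_comm]
  congr 2
  funext j
  simp [Pi.single_apply, eq_comm]

/-- Descent lemma. -/
lemma descent {n : ℕ} {L : ℝ} (hL : 0 < L) (f : (Fin n → ℝ) → ℝ) (hf : Differentiable ℝ f)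
    (gradf : (Fin n → ℝ) → Fin n → ℝ)
    (hgrad : ∀ y i, gradf y i = fderiv ℝ f y (Pi.single i 1))
    (hlip : ∀ u v : Fin n → ℝ,
      Real.sqrt (∑ i, (gradf u i - gradf v i) ^ 2) ≤ L * Real.sqrt (∑ i, (u i - v i) ^ 2))
    (u v : Fin n → ℝ) :
    f v - f u ≤ (∑ i, gradf u i * (v i - u i)) + L / 2 * ∑ i, (v i - u i) ^ 2 := by
  set d : Fin n → ℝ := fun i => v i - u i with hd
  set G : ℝ := ∑ i, gradf u i * d i with hG
  set Q : ℝ := ∑ i, d i ^ 2 with hQ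
  have hQ0 : 0 ≤ Q := Finset.sum_nonneg fun i _ => sq_nonneg _
  set φ : ℝ → ℝ := fun t => f (u + t • d) - t * G - L / 2 * t ^ 2 * Q with hφ
  have hder : ∀ t : ℝ, HasDerivAt φ
      ((∑ i, gradf (u + t • d) i * d i) - G - L / 2 * (2 * t) * Q) t := by
    intro t
    have hline : HasDerivAt (fun t : ℝ => u + t • d) d t := by
      simpa using ((hasDerivAt_id t).smul_const d).const_add u
    have hcomp : HasDerivAt (fun t : ℝ => f (u + t • d)) (fderiv ℝ f (u + t • d) d) t :=
      (hf (u + t • d)).hasFDerivAt.comp_hasDerivAt t hline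
    rw [fderiv_apply_eq_sum f gradf hgrad] at hcomp
    have h2 : HasDerivAt (fun t : ℝ => t * G) G t := by
      simpa using (hasDerivAt_id t).mul_const G
    have h3 : HasDerivAt (fun t : ℝ => L / 2 * t ^ 2 * Q) (L / 2 * (2 * t) * Q) t := by
      have := ((hasDerivAt_pow 2 t).const_mul (L / 2)).mul_const Q
      simpa using this
    exact (hcomp.sub h2).sub h3
  have hderiv_nonpos : ∀ t ∈ Set.Ioo (0:ℝ) 1, deriv φ t ≤ 0 := by
    intro t ht
    rw [(hder t).deriv]
    have hts : ∀ i, (u + t • d) i - u i = t * d i := by intro i; simp [mul_comm]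
    have hCS : (∑ i, (gradf (u + t • d) i - gradf u i) * d i)
        ≤ Real.sqrt (∑ i, (gradf (u + t • d) i - gradf u i) ^ 2) * Real.sqrt Q :=
      Real.sum_mul_le_sqrt_mul_sqrt _ _ _
    have hlipx := hlip (u + t • d) u
    have hsq : Real.sqrt (∑ i, ((u + t • d) i - u i) ^ 2) = t * Real.sqrt Q := by
      have : (∑ i, ((u + t • d) i - u i) ^ 2) = t ^ 2 * Q := by
        rw [hQ, Finset.mul_sum]
        exact Finset.sum_congr rfl fun i _ => by rw [hts i]; ring
      rw [this, Real.sqrt_mul (sq_nonneg t), Real.sqrt_sq ht.1.le]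
    have hbound : (∑ i, (gradf (u + t • d) i - gradf u i) * d i) ≤ L * t * Q := by
      calc (∑ i, (gradf (u + t • d) i - gradf u i) * d i)
          ≤ Real.sqrt (∑ i, (gradf (u + t • d) i - gradf u i) ^ 2) * Real.sqrt Q := hCS
        _ ≤ (L * (t * Real.sqrt Q)) * Real.sqrt Q := by
            apply mul_le_mul_of_nonneg_right _ (Real.sqrt_nonneg _)
            rw [← hsq]; exact hlipx
        _ = L * t * (Real.sqrt Q * Real.sqrt Q) := by ring
        _ = L * t * Q := by rw [Real.mul_self_sqrt hQ0]
    have hsplit : (∑ i, gradf (u + t • d) i * d i) - G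
        = ∑ i, (gradf (u + t • d) i - gradf u i) * d i := by
      rw [hG, ← Finset.sum_sub_distrib]
      exact Finset.sum_congr rfl fun i _ => by ring
    have : L / 2 * (2 * t) * Q = L * t * Q := by ring
    rw [this]
    linarith [hbound, hsplit ▸ hbound]
  have hmono : AntitoneOn φ (Set.Icc (0:ℝ) 1) := by
    apply antitoneOn_of_deriv_nonpos (convex_Icc 0 1)
    · exact (Continuous.continuousOn (by
        have : ∀ t, DifferentiableAt ℝ φ t := fun t => (hder t).differentiableAt
        exact Differentiable.continuous this))
    · intro t ht
      exact ((hder t).differentiableAt).differentiableWithinAt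
    · intro t ht
      rw [interior_Icc] at ht
      exact hderiv_nonpos t ht
  have h01 := hmono (Set.left_mem_Icc.mpr zero_le_one) (Set.right_mem_Icc.mpr zero_le_one) zero_le_one
  have e0 : φ 0 = f u := by simp [hφ]
  have e1 : φ 1 = f v - G - L / 2 * Q := by
    have huv : u + (1:ℝ) • d = v := by funext i; simp [hd]
    show f (u + (1:ℝ) • d) - 1 * G - L / 2 * 1 ^ 2 * Q = _
    rw [huv]; ring
  rw [e0, e1] at h01
  have hGeq : G = ∑ i, gradf u i * (v i - u i) := rfl
  linarith [h01]


/-- sufficient decrease for the two-metric adaptive projection on ψ = f + γ‖·‖₁. -/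
theorem stmt_17 (n : ℕ) (γ : ℝ) (hγ : 0 < γ)
    (f : (Fin n → ℝ) → ℝ) (hf : Differentiable ℝ f)
    (gradf : (Fin n → ℝ) → Fin n → ℝ)
    (hgrad : ∀ y i, gradf y i = fderiv ℝ f y (Pi.single i 1))
    (L : ℝ) (hL : 0 < L)
    (hlip : ∀ u v : Fin n → ℝ,
      Real.sqrt (∑ i, (gradf u i - gradf v i) ^ 2) ≤ L * Real.sqrt (∑ i, (u i - v i) ^ 2))
    (ψ : (Fin n → ℝ) → ℝ) (hψ : ∀ y, ψ y = f y + γ * ∑ i, |y i|)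
    (x : Fin n → ℝ) (g : Fin n → ℝ) (hg : g = gradf x)
    (D : Matrix (Fin n) (Fin n) ℝ) (hD : D.PosDef)
    (lmax : ℝ) (hlmax : 0 < lmax)
    (hmax : ∀ z : Fin n → ℝ, z ⬝ᵥ D.mulVec z ≤ lmax * (z ⬝ᵥ z))
    (Iplus : Finset (Fin n))
    (hIplus : ∀ i, i ∈ Iplus ↔ x i = 0 ∧ |g i| < γ)
    (hdiag : ∀ i ∈ Iplus, ∀ j, j ≠ i → D i j = 0)
    (ω : Fin n → ℝ)
    (hω : ∀ i, (0 < x i ∨ (x i = 0 ∧ g i ≤ -γ) → ω i = γ) ∧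
      (x i < 0 ∨ (x i = 0 ∧ γ ≤ g i) → ω i = -γ) ∧
      (x i = 0 ∧ |g i| < γ → ω i = 0))
    (p : Fin n → ℝ) (hp : p = D.mulVec (g + ω))
    (σ : ℝ) (hσ : σ ∈ Set.Ioo (0 : ℝ) 1)
    (α : ℝ) (hα : 0 < α) (hα2 : α ≤ 2 * (1 - σ) / (L * lmax))
    (xα : Fin n → ℝ)
    (hxα : ∀ i,
      (0 < x i ∨ (x i = 0 ∧ g i ≤ -γ) → xα i = max (x i - α * p i) 0) ∧
      (x i < 0 ∨ (x i = 0 ∧ γ ≤ g i) → xα i = min (x i - α * p i) 0) ∧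
      (x i = 0 ∧ |g i| < γ → xα i = 0))
    (hsign : ∀ i, x i ≠ 0 → 0 < x i * xα i) :
    ψ x - ψ xα ≥ σ * α * ∑ i ∈ Iplusᶜ, (g i + ω i) * p i := by
  have hDsym : ∀ i j, D i j = D j i := fun i j =>
    (show D j i = D i j by simpa using hD.isHermitian.apply i j).symm
  -- key per-coordinate analysis
  have key : ∀ i, (γ * (|xα i| - |x i|) = ω i * (xα i - x i)) ∧
      (i ∈ Iplus → xα i - x i = 0) ∧
      (i ∉ Iplus → (xα i - x i = -(α * p i) ∨
        (xα i - x i = 0 ∧ (g i + ω i) * p i ≤ 0))) := by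
    intro i
    obtain ⟨hω1, hω2, hω3⟩ := hω i
    obtain ⟨hx1, hx2, hx3⟩ := hxα i
    rcases lt_trichotomy (x i) 0 with hneg | hzero | hpos
    · -- x i < 0
      have hnotin : i ∉ Iplus := by rw [hIplus]; rintro ⟨h0, -⟩; linarith
      have hωi : ω i = -γ := hω2 (Or.inl hneg)
      have hxi : xα i = min (x i - α * p i) 0 := hx2 (Or.inl hneg)
      have hxneg : xα i < 0 := by
        have := hsign i (ne_of_lt hneg); nlinarith
      have hxm : xα i = x i - α * p i := by
        rcases le_or_gt 0 (x i - α * p i) with h | h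
        · exfalso; rw [hxi, min_eq_right h] at hxneg; exact lt_irrefl 0 hxneg
        · rw [hxi, min_eq_left h.le]
      refine ⟨?_, fun h => absurd h hnotin, fun _ => Or.inl (by rw [hxm]; ring)⟩
      rw [abs_of_neg hxneg, abs_of_neg hneg, hωi]; ring
    · -- x i = 0
      rcases le_or_gt (g i) (-γ) with hg1 | hg1
      · -- g i ≤ -γ
        have hnotin : i ∉ Iplus := by
          rw [hIplus]; rintro ⟨-, habs⟩; rw [abs_lt] at habs; linarith [habs.1]
        have hωi : ω i = γ := hω1 (Or.inr ⟨hzero, hg1⟩)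
        have hxi : xα i = max (x i - α * p i) 0 := hx1 (Or.inr ⟨hzero, hg1⟩)
        rw [hzero, zero_sub] at hxi
        rcases le_or_gt (p i) 0 with hp1 | hp1
        · have hge : 0 ≤ -(α * p i) := by nlinarith
          have hxm : xα i = -(α * p i) := by rw [hxi, max_eq_left hge]
          refine ⟨?_, fun h => absurd h hnotin,
            fun _ => Or.inl (by rw [hxm, hzero]; ring)⟩
          rw [hzero, abs_zero, hxm, hωi, abs_of_nonneg hge] <;> ring
        · have hxm : xα i = 0 := by rw [hxi, max_eq_right (by nlinarith)]
          refine ⟨?_, fun h => absurd h hnotin,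
            fun _ => Or.inr ⟨by rw [hxm, hzero]; ring, ?_⟩⟩
          · rw [hzero, hxm]; simp
          · rw [hωi]; nlinarith
      · rcases le_or_gt γ (g i) with hg2 | hg2
        · -- γ ≤ g i
          have hnotin : i ∉ Iplus := by
            rw [hIplus]; rintro ⟨-, habs⟩; rw [abs_lt] at habs; linarith [habs.2]
          have hωi : ω i = -γ := hω2 (Or.inr ⟨hzero, hg2⟩)
          have hxi : xα i = min (x i - α * p i) 0 := hx2 (Or.inr ⟨hzero, hg2⟩)
          rw [hzero, zero_sub] at hxi
          rcases le_or_gt 0 (p i) with hp1 | hp1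
          · have hle : -(α * p i) ≤ 0 := by nlinarith
            have hxm : xα i = -(α * p i) := by rw [hxi, min_eq_left hle]
            refine ⟨?_, fun h => absurd h hnotin,
              fun _ => Or.inl (by rw [hxm, hzero]; ring)⟩
            rw [hzero, abs_zero, hxm, hωi, abs_of_nonpos hle] <;> ring
          · have hxm : xα i = 0 := by rw [hxi, min_eq_right (by nlinarith)]
            refine ⟨?_, fun h => absurd h hnotin,
              fun _ => Or.inr ⟨by rw [hxm, hzero]; ring, ?_⟩⟩
            · rw [hzero, hxm]; simp
            · rw [hωi]; nlinarith
        · -- |g i| < γ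
          have habs : |g i| < γ := abs_lt.mpr ⟨hg1, hg2⟩
          have hin : i ∈ Iplus := (hIplus i).2 ⟨hzero, habs⟩
          have hxm : xα i = 0 := hx3 ⟨hzero, habs⟩
          exact ⟨by rw [hzero, hxm]; simp, fun _ => by rw [hxm, hzero]; ring,
            fun h => absurd hin h⟩
    · -- 0 < x i
      have hnotin : i ∉ Iplus := by rw [hIplus]; rintro ⟨h0, -⟩; linarith
      have hωi : ω i = γ := hω1 (Or.inl hpos)
      have hxi : xα i = max (x i - α * p i) 0 := hx1 (Or.inl hpos)
      have hxpos : 0 < xα i := by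
        have := hsign i (ne_of_gt hpos); nlinarith
      have hxm : xα i = x i - α * p i := by
        rcases le_or_gt (x i - α * p i) 0 with h | h
        · exfalso; rw [hxi, max_eq_right h] at hxpos; exact lt_irrefl 0 hxpos
        · rw [hxi, max_eq_left h.le]
      refine ⟨?_, fun h => absurd h hnotin, fun _ => Or.inl (by rw [hxm]; ring)⟩
      rw [abs_of_pos hxpos, abs_of_pos hpos, hωi] <;> ring
  -- notation
  set T : Finset (Fin n) := Finset.univ.filter (fun i => xα i - x i ≠ 0) with hTdef
  have hTmem : ∀ i, i ∈ T ↔ xα i - x i ≠ 0 := by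
    intro i; simp [hTdef]
  have hTnot : ∀ i, i ∉ Iplus → i ∈ T → xα i - x i = -(α * p i) := by
    intro i hni hi
    rcases (key i).2.2 hni with h | ⟨h0, -⟩
    · exact h
    · exact absurd h0 ((hTmem i).1 hi)
  have hsub : T ⊆ Iplusᶜ := by
    intro i hi
    rw [Finset.mem_compl]
    intro hin
    exact (hTmem i).1 hi ((key i).2.1 hin)
  set ST : ℝ := ∑ i ∈ T, (g i + ω i) * p i with hSTdef
  set PT : ℝ := ∑ i ∈ T, p i ^ 2 with hPTdef
  set Sfull : ℝ := ∑ i ∈ Iplusᶜ, (g i + ω i) * p i with hSfulldef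
  -- Sfull ≤ ST
  have hfull_le : Sfull ≤ ST := by
    have hsd := Finset.sum_sdiff (f := fun i => (g i + ω i) * p i) hsub
    have hneg : ∑ i ∈ Iplusᶜ \ T, (g i + ω i) * p i ≤ 0 := by
      apply Finset.sum_nonpos
      intro i hi
      rw [Finset.mem_sdiff] at hi
      have hni : i ∉ Iplus := Finset.mem_compl.mp hi.1
      have hd0 : xα i - x i = 0 := by
        by_contra h
        exact hi.2 ((hTmem i).2 h)
      rcases (key i).2.2 hni with h | ⟨-, h⟩
      · have hpz : p i = 0 := by
          rw [hd0] at h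
          have : α * p i = 0 := by linarith
          rcases mul_eq_zero.mp this with h' | h'
          · exact absurd h' (ne_of_gt hα)
          · exact h'
        rw [hpz]; simp
      · exact h
    linarith [hsd]
  -- matrix estimates
  set vtr : Fin n → ℝ := fun i => if i ∈ Iplus then 0 else g i + ω i with hvtrdef
  set q : Fin n → ℝ := D.mulVec vtr with hqdef
  have hq : ∀ i ∈ Iplusᶜ, q i = p i := by
    intro i hi
    have hni : i ∉ Iplus := Finset.mem_compl.mp hi
    rw [hqdef, hp]
    simp only [Matrix.mulVec, dotProduct]
    refine Finset.sum_congr rfl fun j _ => ?_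
    by_cases hj : j ∈ Iplus
    · have hij : i ≠ j := fun h => hni (h ▸ hj)
      have hz : D i j = 0 := by rw [hDsym i j]; exact hdiag j hj i hij
      simp [hz]
    · simp only [hvtrdef, if_neg hj, Pi.add_apply]
  have hvq : vtr ⬝ᵥ q = Sfull := by
    rw [hSfulldef]
    rw [dotProduct]
    rw [← Finset.sum_subset (Finset.subset_univ Iplusᶜ) (fun i _ hi => by
      have hin : i ∈ Iplus := by simpa using hi
      simp [hvtrdef, if_pos hin])]
    refine Finset.sum_congr rfl fun i hi => ?_
    have hni : i ∉ Iplus := Finset.mem_compl.mp hi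
    rw [hq i hi]
    simp [hvtrdef, if_neg hni]
  have hS0 : 0 ≤ Sfull := by
    rw [← hvq, hqdef]
    have := hD.posSemidef.dotProduct_mulVec_nonneg vtr
    simpa using this
  have hq2 : ∑ i ∈ Iplusᶜ, p i ^ 2 ≤ lmax * Sfull := by
    have h1 : ∑ i ∈ Iplusᶜ, p i ^ 2 = ∑ i ∈ Iplusᶜ, q i ^ 2 :=
      Finset.sum_congr rfl fun i hi => by rw [hq i hi]
    have h2 : ∑ i ∈ Iplusᶜ, q i ^ 2 ≤ ∑ i, q i ^ 2 :=
      Finset.sum_le_sum_of_subset_of_nonneg (Finset.subset_univ _)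
        (fun i _ _ => sq_nonneg _)
    have h3 : ∑ i, q i ^ 2 = q ⬝ᵥ q := by
      rw [dotProduct]; exact Finset.sum_congr rfl fun i _ => (sq (q i)).symm ▸ by ring
    have h4 : q ⬝ᵥ q ≤ lmax * (vtr ⬝ᵥ q) := by
      rw [hqdef]; exact matkey D hD.posSemidef lmax hmax vtr
    rw [hvq] at h4
    linarith
  have hPTle : PT ≤ lmax * Sfull := by
    have : PT ≤ ∑ i ∈ Iplusᶜ, p i ^ 2 :=
      Finset.sum_le_sum_of_subset_of_nonneg hsub (fun i _ _ => sq_nonneg _)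
    linarith
  have hST0 : 0 ≤ ST := le_trans hS0 hfull_le
  -- function value decomposition
  have hψeq : ψ x - ψ xα = (f x - f xα) - ∑ i, ω i * (xα i - x i) := by
    rw [hψ x, hψ xα]
    have hsum : ∑ i, ω i * (xα i - x i) = ∑ i, (γ * |xα i| - γ * |x i|) := by
      refine Finset.sum_congr rfl fun i _ => ?_
      have h := (key i).1
      linarith
    rw [hsum, Finset.sum_sub_distrib, ← Finset.mul_sum, ← Finset.mul_sum]
    ring
  have hdes : f xα - f x ≤ ∑ i, g i * (xα i - x i) + L / 2 * ∑ i, (xα i - x i) ^ 2 := by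
    have := descent hL f hf gradf hgrad hlip x xα
    rw [hg]
    exact this
  have hsplit : ∑ i, (g i + ω i) * (xα i - x i)
      = ∑ i, g i * (xα i - x i) + ∑ i, ω i * (xα i - x i) := by
    rw [← Finset.sum_add_distrib]
    exact Finset.sum_congr rfl fun i _ => by ring
  -- rewrite the sums over T
  have hsum1 : ∑ i, (g i + ω i) * (xα i - x i) = -(α * ST) := by
    rw [hSTdef, ← Finset.sum_subset (Finset.subset_univ T) (fun i _ hi => by
      have hd0 : xα i - x i = 0 := by
        by_contra h; exact hi ((hTmem i).2 h)
      rw [hd0]; ring)]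
    rw [Finset.mul_sum, ← Finset.sum_neg_distrib]
    refine Finset.sum_congr rfl fun i hi => ?_
    rw [hTnot i (Finset.mem_compl.mp (hsub hi)) hi]
    ring
  have hsum2 : ∑ i, (xα i - x i) ^ 2 = α ^ 2 * PT := by
    rw [hPTdef, ← Finset.sum_subset (Finset.subset_univ T) (fun i _ hi => by
      have hd0 : xα i - x i = 0 := by
        by_contra h; exact hi ((hTmem i).2 h)
      rw [hd0]; ring)]
    rw [Finset.mul_sum]
    refine Finset.sum_congr rfl fun i hi => ?_
    rw [hTnot i (Finset.mem_compl.mp (hsub hi)) hi]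
    ring
  -- final arithmetic
  have hα2' : α * (L * lmax) ≤ 2 * (1 - σ) := by
    rw [← le_div_iff₀ (by positivity)]
    exact hα2
  have hcomb : ψ x - ψ xα ≥ α * ST - L / 2 * (α ^ 2 * PT) := by
    have h := hdes
    rw [hsum2] at h
    have h2 : ∑ i, g i * (xα i - x i) = -(α * ST) - ∑ i, ω i * (xα i - x i) := by
      linarith [hsum1, hsplit]
    linarith [hψeq, h, h2]
  have c1 : L / 2 * (α ^ 2 * PT) ≤ L / 2 * α ^ 2 * (lmax * ST) := by
    have hlm : lmax * Sfull ≤ lmax * ST := mul_le_mul_of_nonneg_left hfull_le hlmax.le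
    have h := mul_le_mul_of_nonneg_left (le_trans hPTle hlm)
      (show (0:ℝ) ≤ L / 2 * α ^ 2 by positivity)
    calc L / 2 * (α ^ 2 * PT) = L / 2 * α ^ 2 * PT := by ring
      _ ≤ L / 2 * α ^ 2 * (lmax * ST) := h
  have c2 : σ * α * Sfull ≤ σ * α * ST :=
    mul_le_mul_of_nonneg_left hfull_le (mul_nonneg hσ.1.le hα.le)
  have c3 : α * ST - L / 2 * α ^ 2 * (lmax * ST) ≥ σ * α * ST := by
    have hprod : 0 ≤ (2 * (1 - σ) - α * (L * lmax)) * (α * ST) :=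
      mul_nonneg (by linarith) (mul_nonneg hα.le hST0)
    nlinarith [hprod]
  linarith [hcomb, c1, c2, c3]
end
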